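/- arXiv:2212.06248 — 2 statements merged into one kernel-verified Lean document; each statement's English description precedes it below -/
import Mathlib

section
/- Let G be a finite graph with a fixed orientation. An orientation O of G is acyclic if and only if there is no orientation O' of G, distinct from O, such that [O] − [O'] ∈ 2·Flow(G) + 2·Cut(G) with the Flow-component nonzero; more precisely, the restriction of [O] to Flow(G) is the unique short characteristic element in its coset of Char(Flow(G))/2Flow(G) if and only if O is acyclic. -/
/-- `x : E → ℤ` is a flow: it lies in `Flow(G) = ker ∂ ⊆ C₁(G;ℤ)`. -/
def IsFlow {V E : Type} [Fintype E] [DecidableEq V] (src tgt : E → V) (x : E → ℤ) : Prop :=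
  ∀ v : V, ∑ e, x e * ((if tgt e = v then 1 else 0) - (if src e = v then 1 else 0)) = 0

/-- `x : E → ℤ` is a cut: it lies in `Cut(G) = im ∂* = Flow(G)^⊥ ⊆ C₁(G;ℤ)`. -/
def IsCut {V E : Type} (src tgt : E → V) (x : E → ℤ) : Prop :=
  ∃ z : V → ℤ, ∀ e, x e = z (tgt e) - z (src e)

/-- Two edges share a vertex. -/
def SharesVertex {V E : Type} (src tgt : E → V) (a b : E) : Prop :=
  src a = src b ∨ src a = tgt b ∨ tgt a = src b ∨ tgt a = tgt b

/-- The head of an edge `e` in the orientation determined by the sign of `x e`. -/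
def flowHead {V E : Type} (src tgt : E → V) (x : E → ℤ) (e : E) : V :=
  if x e = 1 then tgt e else src e

/-- `x` is the class of an oriented cycle of `G`. -/
def IsCycleClass {V E : Type} [Fintype E] [DecidableEq V] (src tgt : E → V)
    (x : E → ℤ) : Prop :=
  x ≠ 0 ∧ IsFlow src tgt x ∧ (∀ e, x e = -1 ∨ x e = 0 ∨ x e = 1) ∧
  (∀ v : V, ({e : E | x e ≠ 0 ∧ flowHead src tgt x e = v} : Set E).Subsingleton) ∧
  (∀ a b : E, x a ≠ 0 → x b ≠ 0 →
    Relation.ReflTransGen (fun p q => x p ≠ 0 ∧ x q ≠ 0 ∧ SharesVertex src tgt p q) a b)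

/-- An orientation of `G`, given by its class `[O] ∈ {±1}^E` relative to the reference
orientation. -/
def IsOrientation {E : Type} (O : E → ℤ) : Prop := ∀ e, O e = 1 ∨ O e = -1

/-- The orientation `O` is acyclic: it contains no directed cycle of `G`. -/
def IsAcyclicOrientation {V E : Type} [Fintype E] [DecidableEq V] (src tgt : E → V)
    (O : E → ℤ) : Prop :=
  ¬ ∃ x : E → ℤ, IsCycleClass src tgt x ∧ ∀ e, x e = 0 ∨ x e = O e

/-!
If `[O] − [O'] = 2f + 2c`, then `d = f + c` is `0` or `[O]` on each edge. A flow is orthogonal to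
a cut, so `∑ f c = 0`, while `|f + c| ≤ 1` forces `f e * c e ≤ 0` on every edge; hence `f` and `c`
have disjoint supports and `f` is a flow running along `O`. Following out-edges of such a flow
until a head repeats produces a directed cycle of `O`, so `f ≠ 0` contradicts acyclicity.
Conversely, reversing a directed cycle `x` of `O` gives `O' = O − 2x` with flow component `x`.
-/

open Finset

theorem Function.exists_mem_periodicPts {α : Type*} [Finite α] [Nonempty α] (f : α → α) :
    ∃ x, x ∈ Function.periodicPts f := by
  obtain ⟨m, n, hmn, h⟩ :=
    Finite.exists_ne_map_eq_of_infinite (fun n => f^[n] (Classical.arbitrary α))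
  wlog hlt : m < n generalizing m n
  · exact this n m hmn.symm h.symm (by omega)
  refine ⟨f^[m] (Classical.arbitrary α), Function.mk_mem_periodicPts (n := n - m) (by omega) ?_⟩
  rw [Function.IsPeriodicPt, Function.IsFixedPt, ← Function.iterate_add_apply,
    Nat.sub_add_cancel hlt.le]
  exact h.symm

section Flows

variable {V E : Type} {src tgt : E → V}

def flowTail (src tgt : E → V) (x : E → ℤ) (e : E) : V :=
  if x e = 1 then src e else tgt e

theorem SharesVertex.symm {a b : E} (h : SharesVertex src tgt a b) :
    SharesVertex src tgt b a := by
  unfold SharesVertex at *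
  tauto

theorem sharesVertex_of_flowHead_eq_flowTail {x : E → ℤ} {a b : E}
    (h : flowHead src tgt x a = flowTail src tgt x b) : SharesVertex src tgt a b := by
  unfold flowHead flowTail at h
  unfold SharesVertex
  split_ifs at h <;> tauto

theorem mul_incidence_eq_head_sub_tail [DecidableEq V] {x : E → ℤ} {e : E}
    (hx : x e = 1 ∨ x e = -1) (v : V) :
    x e * ((if tgt e = v then 1 else 0) - (if src e = v then 1 else 0)) =
      (if flowHead src tgt x e = v then 1 else 0) -
        (if flowTail src tgt x e = v then 1 else 0) := by
  rcases hx with h | h <;> simp [flowHead, flowTail, h]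

theorem IsFlow.card_flowHead_eq_card_flowTail [Fintype E] [DecidableEq V] {g : E → ℤ}
    (hg : IsFlow src tgt g) (hval : ∀ e, g e = -1 ∨ g e = 0 ∨ g e = 1) (v : V) :
    #{e | g e ≠ 0 ∧ flowHead src tgt g e = v} = #{e | g e ≠ 0 ∧ flowTail src tgt g e = v} := by
  have hterm : ∀ e, g e * ((if tgt e = v then 1 else 0) - (if src e = v then 1 else 0)) =
      (if g e ≠ 0 ∧ flowHead src tgt g e = v then 1 else 0) -
        (if g e ≠ 0 ∧ flowTail src tgt g e = v then 1 else 0) := by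
    intro e
    by_cases h0 : g e = 0
    · simp [h0]
    · rw [mul_incidence_eq_head_sub_tail (by have := hval e; omega)]
      simp [h0]
  have := hg v
  simp only [hterm, sum_sub_distrib, sum_boole, sub_eq_zero] at this
  exact_mod_cast this

end Flows

section DirectedCycle

variable {V E : Type} {src tgt : E → V}

theorem IsFlow.exists_flowTail_eq [Fintype E] [DecidableEq V] {g : E → ℤ}
    (hg : IsFlow src tgt g) (hval : ∀ e, g e = -1 ∨ g e = 0 ∨ g e = 1) {v : V}
    (hv : ∃ e, g e ≠ 0 ∧ flowHead src tgt g e = v) :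
    ∃ e, g e ≠ 0 ∧ flowTail src tgt g e = v := by
  obtain ⟨e, he⟩ := hv
  have hpos : 0 < #{e | g e ≠ 0 ∧ flowTail src tgt g e = v} := by
    rw [← hg.card_flowHead_eq_card_flowTail hval v]
    exact card_pos.2 ⟨e, by simpa using he⟩
  obtain ⟨e', he'⟩ := card_pos.1 hpos
  exact ⟨e', by simpa using he'⟩

theorem flowHead_indicator_of_mem {g : E → ℤ} {s : Set E} {e : E} (he : e ∈ s) :
    flowHead src tgt (s.indicator g) e = flowHead src tgt g e := by
  simp only [flowHead, Set.indicator_of_mem he]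

structure IsDirectedCycle (src tgt : E → V) (g : E → ℤ) (u : ℕ → V) (w : ℕ → E) (p : ℕ) :
    Prop where
  pos : 0 < p
  sign : ∀ k, g (w k) = 1 ∨ g (w k) = -1
  tail : ∀ k, flowTail src tgt g (w k) = u k
  head : ∀ k, flowHead src tgt g (w k) = u (k + 1)
  closed : u p = u 0
  injOn_head : Set.InjOn (fun k => u (k + 1)) (Set.Iio p)

namespace IsDirectedCycle

variable {g : E → ℤ} {u : ℕ → V} {w : ℕ → E} {p : ℕ}

theorem injOn (hC : IsDirectedCycle src tgt g u w p) : Set.InjOn w (Set.Iio p) := by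
  intro k hk l hl hkl
  apply hC.injOn_head hk hl
  simp only [← hC.head, hkl]

theorem isFlow_indicator [Fintype E] [DecidableEq V] (hC : IsDirectedCycle src tgt g u w p) :
    IsFlow src tgt ((w '' Set.Iio p).indicator g) := by
  classical
  intro v
  have himage : w '' Set.Iio p = ↑((range p).image w) := by simp
  set inc : E → ℤ := fun e => (if tgt e = v then 1 else 0) - (if src e = v then 1 else 0)
  calc ∑ e, (w '' Set.Iio p).indicator g e * inc e
      = ∑ e, (w '' Set.Iio p).indicator (fun e => g e * inc e) e := by
        simp only [Set.indicator_mul_left]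
    _ = ∑ k ∈ range p, g (w k) * inc (w k) := by
        rw [himage, sum_indicator_subset _ (subset_univ _), sum_image (by simpa using hC.injOn)]
    _ = ∑ k ∈ range p, ((if u (k + 1) = v then 1 else 0) - (if u k = v then 1 else 0)) := by
        simp only [inc, mul_incidence_eq_head_sub_tail (hC.sign _), hC.head, hC.tail]
    _ = 0 := by rw [sum_range_sub (fun k => if u k = v then (1 : ℤ) else 0), hC.closed, sub_self]

theorem indicator_ne_zero (hC : IsDirectedCycle src tgt g u w p) {k : ℕ} (hk : k < p) :
    (w '' Set.Iio p).indicator g (w k) ≠ 0 := by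
  rw [Set.indicator_of_mem (Set.mem_image_of_mem w (Set.mem_Iio.2 hk))]
  rcases hC.sign k with h | h <;> omega

theorem subsingleton_flowHead_indicator (hC : IsDirectedCycle src tgt g u w p) (v : V) :
    {e | (w '' Set.Iio p).indicator g e ≠ 0 ∧
      flowHead src tgt ((w '' Set.Iio p).indicator g) e = v}.Subsingleton := by
  rintro _ ⟨ha, hav⟩ _ ⟨hb, hbv⟩
  obtain ⟨k, hk, rfl⟩ := Set.mem_of_indicator_ne_zero ha
  obtain ⟨l, hl, rfl⟩ := Set.mem_of_indicator_ne_zero hb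
  rw [flowHead_indicator_of_mem (Set.mem_image_of_mem w (Set.mem_Iio.2 hk)), hC.head] at hav
  rw [flowHead_indicator_of_mem (Set.mem_image_of_mem w (Set.mem_Iio.2 hl)), hC.head] at hbv
  rw [hC.injOn_head hk hl (hav.trans hbv.symm)]

theorem reflTransGen_sharesVertex (hC : IsDirectedCycle src tgt g u w p) {a b : E}
    (ha : (w '' Set.Iio p).indicator g a ≠ 0) (hb : (w '' Set.Iio p).indicator g b ≠ 0) :
    Relation.ReflTransGen (fun a b => (w '' Set.Iio p).indicator g a ≠ 0 ∧
      (w '' Set.Iio p).indicator g b ≠ 0 ∧ SharesVertex src tgt a b) a b := by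
  set R : E → E → Prop := fun a b => (w '' Set.Iio p).indicator g a ≠ 0 ∧
      (w '' Set.Iio p).indicator g b ≠ 0 ∧ SharesVertex src tgt a b
  have : Std.Symm R := ⟨fun _ _ ⟨ha, hb, h⟩ => ⟨hb, ha, h.symm⟩⟩
  have hchain : ∀ k < p, Relation.ReflTransGen R (w 0) (w k) := by
    intro k hk
    induction k with
    | zero => exact .refl
    | succ k ih =>
      refine (ih (by omega)).tail ⟨hC.indicator_ne_zero (by omega), hC.indicator_ne_zero hk, ?_⟩
      exact sharesVertex_of_flowHead_eq_flowTail ((hC.head k).trans (hC.tail (k + 1)).symm)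
  obtain ⟨k, hk, rfl⟩ := Set.mem_of_indicator_ne_zero ha
  obtain ⟨l, hl, rfl⟩ := Set.mem_of_indicator_ne_zero hb
  exact (Std.Symm.symm _ _ (hchain k hk)).trans (hchain l hl)

theorem isCycleClass_indicator [Fintype E] [DecidableEq V]
    (hC : IsDirectedCycle src tgt g u w p) :
    IsCycleClass src tgt ((w '' Set.Iio p).indicator g) := by
  refine ⟨fun h => hC.indicator_ne_zero hC.pos (congr_fun h (w 0)), hC.isFlow_indicator,
    fun e => ?_, hC.subsingleton_flowHead_indicator, fun a b => hC.reflTransGen_sharesVertex⟩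
  by_cases he : e ∈ w '' Set.Iio p
  · rw [Set.indicator_of_mem he]
    obtain ⟨k, -, rfl⟩ := he
    rcases hC.sign k with h | h <;> simp [h]
  · simp [Set.indicator_of_notMem he]

end IsDirectedCycle

end DirectedCycle

section CycleExtraction

variable {V E : Type} [Fintype V] [Fintype E] [DecidableEq V] {src tgt : E → V}

theorem IsFlow.exists_isDirectedCycle {g : E → ℤ} (hg : IsFlow src tgt g)
    (hval : ∀ e, g e = -1 ∨ g e = 0 ∨ g e = 1) (hne : g ≠ 0) :
    ∃ u w p, IsDirectedCycle src tgt g u w p := by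
  let H := {v : V // ∃ e, g e ≠ 0 ∧ flowHead src tgt g e = v}
  choose out hout_ne hout_tail using fun v : H => hg.exists_flowTail_eq hval v.2
  -- iterating `φ` from a periodic point traces a closed walk whose heads are distinct within
  -- one minimal period
  let φ : H → H := fun v => ⟨flowHead src tgt g (out v), out v, hout_ne v, rfl⟩
  obtain ⟨e₀, he₀⟩ : ∃ e, g e ≠ 0 := by
    by_contra! h
    exact hne (funext h)
  have : Nonempty H := ⟨⟨_, e₀, he₀, rfl⟩⟩
  obtain ⟨x, hx⟩ := Function.exists_mem_periodicPts φ
  refine ⟨fun k => (φ^[k] x).1, fun k => out (φ^[k] x), Function.minimalPeriod φ x,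
    ⟨Function.minimalPeriod_pos_of_mem_periodicPts hx, fun k => ?_, fun k => hout_tail _,
      fun k => ?_, ?_, ?_⟩⟩
  · have := hout_ne (φ^[k] x)
    rcases hval (out (φ^[k] x)) with h | h | h <;> omega
  · rw [Function.iterate_succ_apply']
  · rw [Function.iterate_minimalPeriod, Function.iterate_zero_apply]
  · intro k hk l hl hkl
    rw [← Function.minimalPeriod_apply hx] at hk hl
    refine Function.iterate_injOn_Iio_minimalPeriod hk hl (Subtype.ext ?_)
    simpa only [Function.iterate_succ_apply] using hkl

theorem IsFlow.exists_isCycleClass {g : E → ℤ} (hg : IsFlow src tgt g)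
    (hval : ∀ e, g e = -1 ∨ g e = 0 ∨ g e = 1) (hne : g ≠ 0) :
    ∃ x, IsCycleClass src tgt x ∧ ∀ e, x e = 0 ∨ x e = g e := by
  obtain ⟨u, w, p, hC⟩ := hg.exists_isDirectedCycle hval hne
  exact ⟨_, hC.isCycleClass_indicator, Set.indicator_eq_zero_or_self _ _⟩

end CycleExtraction

theorem Int.mul_nonpos_of_abs_add_le_one {a b : ℤ} (h : |a + b| ≤ 1) : a * b ≤ 0 := by
  rw [abs_le] at h
  by_contra! hab
  rcases mul_pos_iff.1 hab with ⟨ha, hb⟩ | ⟨ha, hb⟩ <;> omega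

section FlowsAndCuts

variable {V E : Type} [Fintype V] [Fintype E] [DecidableEq V] {src tgt : E → V}

theorem IsFlow.sum_mul_eq_zero_of_isCut {f c : E → ℤ} (hf : IsFlow src tgt f)
    (hc : IsCut src tgt c) : ∑ e, f e * c e = 0 := by
  obtain ⟨z, hz⟩ := hc
  have hcoboundary : ∀ e, c e =
      ∑ v, z v * ((if tgt e = v then 1 else 0) - (if src e = v then 1 else 0)) := by
    intro e
    simp [hz e, mul_sub, sum_sub_distrib]
  calc ∑ e, f e * c e
      = ∑ v, z v * ∑ e, f e * ((if tgt e = v then 1 else 0) - (if src e = v then 1 else 0)) := by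
        simp only [hcoboundary, mul_sum]
        rw [sum_comm]
        exact sum_congr rfl fun v _ => sum_congr rfl fun e _ => by ring
    _ = 0 := sum_eq_zero fun v _ => by rw [hf v, mul_zero]

theorem IsFlow.eq_zero_or_eq_zero_of_isCut {f c : E → ℤ} (hf : IsFlow src tgt f)
    (hc : IsCut src tgt c) (hfc : ∀ e, |f e + c e| ≤ 1) (e : E) : f e = 0 ∨ c e = 0 := by
  have hnonpos : ∀ e ∈ univ, f e * c e ≤ 0 := fun e _ => Int.mul_nonpos_of_abs_add_le_one (hfc e)
  exact mul_eq_zero.1 ((sum_eq_zero_iff_of_nonpos hnonpos).1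
    (hf.sum_mul_eq_zero_of_isCut hc) e (mem_univ e))

end FlowsAndCuts

/-- An orientation `O` of `G` is acyclic if and only if there is no orientation `O'` with
`[O] − [O'] ∈ 2·Flow(G) + 2·Cut(G)` and nonzero `Flow`-component; equivalently, the
restriction of `[O]` to `Flow(G)` is the unique short characteristic element in its coset of
`Char(Flow(G))/2Flow(G)` if and only if `O` is acyclic. -/
theorem acyclic_iff_unique_short {V E : Type} [Fintype V] [Fintype E] [DecidableEq V]
    (src tgt : E → V) (O : E → ℤ) (hO : IsOrientation O) :
    IsAcyclicOrientation src tgt O ↔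
      ∀ O' : E → ℤ, IsOrientation O' →
        ∀ f c : E → ℤ, IsFlow src tgt f → IsCut src tgt c →
          (∀ e, O e - O' e = 2 * f e + 2 * c e) → f = 0 := by
  constructor
  · intro hA O' hO' f c hf hc hsum
    have hd : ∀ e, f e + c e = 0 ∨ f e + c e = O e := fun e => by
      have := hsum e
      rcases hO e with h | h <;> rcases hO' e with h' | h' <;> omega
    have hdir : ∀ e, f e = 0 ∨ f e = O e := fun e => by
      have hfc := hf.eq_zero_or_eq_zero_of_isCut hc
        (fun e => abs_le.2 (by rcases hd e with h | h <;> rcases hO e with h' | h' <;> omega)) e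
      rcases hd e with h | h <;> omega
    by_contra hf0
    obtain ⟨x, hx, hxf⟩ := hf.exists_isCycleClass
      (fun e => by rcases hdir e with h | h <;> rcases hO e with h' | h' <;> omega) hf0
    exact hA ⟨x, hx, fun e => by rcases hxf e with h | h <;> rcases hdir e with h' | h' <;> omega⟩
  · rintro hU ⟨x, hx, hxO⟩
    have hreversed : IsOrientation (fun e => O e - 2 * x e) := fun e => by
      rcases hxO e with h | h <;> rcases hO e with h' | h' <;> simp only [h, h'] <;> omega
    exact hx.1 (hU _ hreversed x 0 hx.2.1 ⟨0, by simp⟩ (by simp))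
end

section
/- Let G be a planar graph embedded in S², and let C₁ and C₂ be oriented cycles in G such that [C₁]·[C₂] = 0 and [C₁] + [C₂] is rigid in Flow(G). Then C₁ and C₂ intersect in at most one vertex (in particular they share no edges and are nested). -/
/-- `x` is the oriented boundary of the 2-chain (disk) `D` of faces of the embedding of `G`
in `S²`; `sides e` records the pair of faces to the left and right of the oriented edge `e`. -/
def BoundsDisk {E F : Type} [DecidableEq F] (sides : E → F × F) (D : Finset F) (x : E → ℤ) : Prop :=
  ∀ e, x e = (if (sides e).1 ∈ D then 1 else 0) - (if (sides e).2 ∈ D then 1 else 0)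

/-!
If `C₁` and `C₂` share an edge, then, since `[C₁]·[C₂] = 0` and all coefficients are `0, ±1`,
they traverse some edge `e` in the same direction, so `z = [C₁] + [C₂]` has coefficient `±2` at
`e`. A circuit `c` through `e` conformal to `z` (found by walking along `z` and peeling off closed
walks) then gives `z = c + (z - c)` with `c·(z - c) > 0`, contradicting simplicity.

If `C₁` and `C₂` are edge-disjoint but share two vertices `u ≠ v`, cut each `Cᵢ` into a path `Pᵢ`
from `u` to `v` and the complementary path `Qᵢ`. Then `P₁ + Q₂` and `Q₁ + P₂` are orthogonal
nonzero flows with sum `z`, and neither is `[C₁]` or `[C₂]`, contradicting uniqueness.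
-/

open Finset Function

theorem Function.exists_iterate_mem_periodicPts {α : Type*} [Finite α] (f : α → α) (x : α) :
    ∃ m, f^[m] x ∈ periodicPts f := by
  obtain ⟨m, n, hne, heq⟩ := Finite.exists_ne_map_eq_of_infinite (f^[·] x)
  wlog hlt : m < n generalizing m n
  · exact this n m hne.symm heq.symm (hne.lt_or_gt.resolve_left hlt)
  refine ⟨m, mk_mem_periodicPts (Nat.sub_pos_of_lt hlt) ?_⟩
  rw [IsPeriodicPt, IsFixedPt, ← iterate_add_apply, Nat.sub_add_cancel hlt.le]
  exact heq.symm

theorem Equiv.Perm.injOn_pow_apply_of_forall_lt_ne {α : Type*} (σ : Equiv.Perm α) {a b : α}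
    {N : ℕ} (hN : (σ ^ N) b = a) (hmin : ∀ m < N, (σ ^ m) b ≠ a) :
    Set.InjOn (fun k => (σ ^ k) b) (Set.Iio (N + 1)) := by
  have hrep : ∀ i j, i < j → j ≤ N → (σ ^ i) b ≠ (σ ^ j) b := by
    intro i j hij hjN heq
    -- a repetition would make `b` periodic with period `j - i` and give a shorter path to `a`
    have hper : (σ ^ (j - i)) b = b := (σ ^ i).injective <| by
      simpa [← Equiv.Perm.mul_apply, ← pow_add, Nat.add_sub_cancel' hij.le] using heq.symm
    refine hmin (N - (j - i)) (by omega) ?_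
    rw [← hper, ← Equiv.Perm.mul_apply, ← pow_add, Nat.sub_add_cancel (by omega), hN]
  intro i hi j hj hij
  rw [Set.mem_Iio] at hi hj
  rcases lt_trichotomy i j with h | h | h
  exacts [(hrep i j h (by omega) hij).elim, h, (hrep j i h (by omega) hij.symm).elim]

namespace Int

theorem sign_sub_sign_eq_zero_or_eq_sign (a : ℤ) :
    (a - a.sign).sign = 0 ∨ (a - a.sign).sign = a.sign := by
  obtain h | rfl | h := lt_trichotomy a 0
  · rw [sign_eq_neg_one_of_neg h]
    obtain rfl | h' := (show a = -1 ∨ a < -1 by omega)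
    · exact .inl rfl
    · exact .inr (sign_eq_neg_one_of_neg (by omega))
  · simp
  · rw [sign_eq_one_of_pos h]
    obtain rfl | h' := (show a = 1 ∨ 1 < a by omega)
    · exact .inl rfl
    · exact .inr (sign_eq_one_of_pos (by omega))

theorem natAbs_sub_sign_le (a : ℤ) : (a - a.sign).natAbs ≤ a.natAbs := by
  obtain h | rfl | h := lt_trichotomy a 0
  · rw [sign_eq_neg_one_of_neg h]; omega
  · simp
  · rw [sign_eq_one_of_pos h]; omega

theorem natAbs_sub_sign_lt {a : ℤ} (ha : a ≠ 0) : (a - a.sign).natAbs < a.natAbs := by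
  obtain h | h := ha.lt_or_gt
  · rw [sign_eq_neg_one_of_neg h]; omega
  · rw [sign_eq_one_of_pos h]; omega

theorem sign_mul_sub_sign_nonneg (a : ℤ) : 0 ≤ a.sign * (a - a.sign) := by
  obtain h | rfl | h := lt_trichotomy a 0
  · rw [sign_eq_neg_one_of_neg h]; omega
  · simp
  · rw [sign_eq_one_of_pos h]; omega

theorem sign_mul_sub_sign_pos {a : ℤ} (ha : 2 ≤ |a|) : 0 < a.sign * (a - a.sign) := by
  obtain h | h := (show a ≠ 0 by rintro rfl; simp at ha).lt_or_gt
  · rw [sign_eq_neg_one_of_neg h, abs_of_neg h] at *; omega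
  · rw [sign_eq_one_of_pos h, abs_of_pos h] at *; omega

end Int

section Chains

variable {V E : Type} [DecidableEq V] (src tgt : E → V)

def incidence (e : E) (v : V) : ℤ :=
  (if tgt e = v then 1 else 0) - (if src e = v then 1 else 0)

def orientedHead (x : E → ℤ) (e : E) : V := if 0 < x e then tgt e else src e

def orientedTail (x : E → ℤ) (e : E) : V := if 0 < x e then src e else tgt e

def signChainOn [DecidableEq E] (z : E → ℤ) (s : Finset E) : E → ℤ :=
  fun e => if e ∈ s then (z e).sign else 0

def IsSubchain (c x : E → ℤ) : Prop := ∀ e, c e = 0 ∨ c e = x e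

variable {src tgt}

theorem mul_incidence_eq_abs_mul (x : E → ℤ) (e : E) (v : V) :
    x e * incidence src tgt e v = |x e| *
      ((if orientedHead src tgt x e = v then 1 else 0) -
        (if orientedTail src tgt x e = v then 1 else 0)) := by
  unfold incidence orientedHead orientedTail
  obtain h | h | h := lt_trichotomy (x e) 0
  · simp only [abs_of_neg h, not_lt.2 h.le, if_false]; ring
  · simp [h]
  · simp only [abs_of_pos h, h, if_true]

theorem sign_mul_incidence {x : E → ℤ} {e : E} (he : x e ≠ 0) (v : V) :
    (x e).sign * incidence src tgt e v =
      (if orientedHead src tgt x e = v then 1 else 0) -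
        (if orientedTail src tgt x e = v then 1 else 0) := by
  unfold incidence orientedHead orientedTail
  obtain h | h := he.lt_or_gt
  · simp only [Int.sign_eq_neg_one_of_neg h, not_lt.2 h.le, if_false]; ring
  · simp only [Int.sign_eq_one_of_pos h, h, if_true]; ring

theorem isSubchain_signChainOn [DecidableEq E] (z : E → ℤ) (s : Finset E) :
    IsSubchain (signChainOn z s) (Int.sign ∘ z) := fun e => by
  unfold signChainOn; split_ifs <;> simp

theorem IsSubchain.eq_zero {p x : E → ℤ} (hp : IsSubchain p x) {e : E} (he : x e = 0) :
    p e = 0 := by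
  rcases hp e with h | h <;> simp [h, he]

theorem IsSubchain.mul_sub_eq_zero {p x : E → ℤ} (hp : IsSubchain p x) (e : E) :
    p e * (x e - p e) = 0 := by
  rcases hp e with h | h <;> simp [h]

theorem IsSubchain.sum_natAbs_sub_lt [Fintype E] {c z : E → ℤ}
    (hc : IsSubchain c (Int.sign ∘ z)) (hc0 : c ≠ 0) :
    ∑ f, ((z - c) f).natAbs < ∑ f, (z f).natAbs := by
  obtain ⟨f₀, hf₀⟩ : ∃ f, c f ≠ 0 := Function.ne_iff.1 hc0
  refine sum_lt_sum (fun f _ => ?_) ⟨f₀, mem_univ _, ?_⟩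
  · rcases hc f with h | h
    · simp [h]
    · rw [Pi.sub_apply, h]; exact Int.natAbs_sub_sign_le _
  · have h := (hc f₀).resolve_left hf₀
    have hz : z f₀ ≠ 0 := fun hz => hf₀ (by simp [h, hz])
    rw [Pi.sub_apply, h]; exact Int.natAbs_sub_sign_lt hz

theorem IsSubchain.trans_sign_sub {c c' z : E → ℤ} (hc' : IsSubchain c' (Int.sign ∘ z))
    (hc : IsSubchain c (Int.sign ∘ (z - c'))) : IsSubchain c (Int.sign ∘ z) := fun f => by
  rcases hc f with h | h
  · exact .inl h
  rcases hc' f with h' | h' <;>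
    simp only [Function.comp_apply, Pi.sub_apply, h', sub_zero] at h h'
  · exact .inr h
  · rcases Int.sign_sub_sign_eq_zero_or_eq_sign (z f) with h'' | h''
    exacts [.inl (h.trans h''), .inr (h.trans h'')]

variable [Fintype E]

variable (src tgt) in
def chainBoundary : (E → ℤ) →+ (V → ℤ) where
  toFun x v := ∑ e, x e * incidence src tgt e v
  map_zero' := by ext; simp
  map_add' x y := by ext; simp [add_mul, sum_add_distrib]

theorem chainBoundary_apply (x : E → ℤ) (v : V) :
    chainBoundary src tgt x v = ∑ e, x e * incidence src tgt e v := rfl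

theorem isFlow_iff_chainBoundary_eq_zero {x : E → ℤ} :
    IsFlow src tgt x ↔ chainBoundary src tgt x = 0 := by
  simp [IsFlow, funext_iff, chainBoundary_apply, incidence]

theorem IsFlow.add {x y : E → ℤ} (hx : IsFlow src tgt x) (hy : IsFlow src tgt y) :
    IsFlow src tgt (x + y) := by
  rw [isFlow_iff_chainBoundary_eq_zero] at *
  rw [map_add, hx, hy, add_zero]

theorem IsFlow.sub {x y : E → ℤ} (hx : IsFlow src tgt x) (hy : IsFlow src tgt y) :
    IsFlow src tgt (x - y) := by
  rw [isFlow_iff_chainBoundary_eq_zero] at *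
  rw [map_sub, hx, hy, sub_zero]

theorem IsFlow.exists_orientedTail_eq {z : E → ℤ} (hz : IsFlow src tgt z) {e : E}
    (he : z e ≠ 0) : ∃ e', z e' ≠ 0 ∧ orientedTail src tgt z e' = orientedHead src tgt z e := by
  by_contra! h
  set w := orientedHead src tgt z e
  have hpos : 0 < ∑ f, |z f| * ((if orientedHead src tgt z f = w then 1 else 0) -
      (if orientedTail src tgt z f = w then 1 else 0)) := by
    refine sum_pos' (fun f _ => ?_) ⟨e, mem_univ e, ?_⟩
    · by_cases hf : z f = 0
      · simp [hf]
      · rw [if_neg (h f hf), sub_zero]; exact mul_nonneg (abs_nonneg _) (by split_ifs <;> simp)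
    · rw [if_pos rfl, if_neg (h e he)]; simpa using he
  simp_rw [← mul_incidence_eq_abs_mul] at hpos
  exact hpos.ne' (hz w)

theorem chainBoundary_signChainOn_trail [DecidableEq E] (z : E → ℤ) (g : ℕ → E) (n : ℕ)
    (hz : ∀ k < n, z (g k) ≠ 0) (hinj : Set.InjOn g (Set.Iio n))
    (hchain : ∀ k < n, orientedTail src tgt z (g (k + 1)) = orientedHead src tgt z (g k))
    (w : V) :
    chainBoundary src tgt (signChainOn z ((range n).image g)) w =
      (if orientedTail src tgt z (g n) = w then 1 else 0) -
        (if orientedTail src tgt z (g 0) = w then 1 else 0) := by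
  have hinj' : Set.InjOn g (range n) := by simpa [Set.InjOn] using hinj
  rw [chainBoundary_apply]
  simp only [signChainOn, ite_mul, zero_mul, sum_ite_mem, univ_inter, sum_image hinj']
  rw [← sum_range_sub (fun k => if orientedTail src tgt z (g k) = w then (1 : ℤ) else 0)]
  refine sum_congr rfl fun k hk => ?_
  rw [mem_range] at hk
  rw [sign_mul_incidence (hz k hk), hchain k hk]

end Chains

section Circuits

variable {V E : Type} [Fintype E] [DecidableEq V] {src tgt : E → V}

theorem IsFlow.exists_successor {z : E → ℤ} (hz : IsFlow src tgt z) :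
    ∃ σ : E → E, ∀ e, z e ≠ 0 →
      z (σ e) ≠ 0 ∧ orientedTail src tgt z (σ e) = orientedHead src tgt z e := by
  choose! σ hσ using fun e (he : z e ≠ 0) => hz.exists_orientedTail_eq he
  exact ⟨σ, hσ⟩

theorem IsFlow.exists_circuit {z : E → ℤ} (hz : IsFlow src tgt z) (hz0 : z ≠ 0) :
    ∃ c, IsFlow src tgt c ∧ c ≠ 0 ∧ IsSubchain c (Int.sign ∘ z) := by
  classical
  obtain ⟨e₀, he₀⟩ : ∃ e, z e ≠ 0 := Function.ne_iff.1 hz0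
  obtain ⟨σ, hσ⟩ := hz.exists_successor
  have hsupp : ∀ e, z e ≠ 0 → ∀ k, z (σ^[k] e) ≠ 0 := fun e he k => by
    induction k with
    | zero => exact he
    | succ k ih => rw [iterate_succ_apply']; exact (hσ _ ih).1
  obtain ⟨g₀, hg₀, hzg₀⟩ : ∃ g₀ ∈ periodicPts σ, z g₀ ≠ 0 :=
    let ⟨m, hm⟩ := exists_iterate_mem_periodicPts σ e₀
    ⟨_, hm, hsupp _ he₀ m⟩
  set n := minimalPeriod σ g₀
  refine ⟨signChainOn z ((range n).image (σ^[·] g₀)), ?_, ?_, isSubchain_signChainOn _ _⟩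
  · rw [isFlow_iff_chainBoundary_eq_zero]
    ext w
    rw [chainBoundary_signChainOn_trail z _ n (fun k _ => hsupp _ hzg₀ k)
      iterate_injOn_Iio_minimalPeriod
      (fun k _ => by rw [iterate_succ_apply']; exact (hσ _ (hsupp _ hzg₀ k)).2)]
    rw [iterate_minimalPeriod, iterate_zero_apply, sub_self, Pi.zero_apply]
  · have hmem : g₀ ∈ (range n).image (σ^[·] g₀) :=
      mem_image.2 ⟨0, mem_range.2 (minimalPeriod_pos_of_mem_periodicPts hg₀), rfl⟩
    exact Function.ne_iff.2 ⟨g₀, by simpa [signChainOn, hmem] using hzg₀⟩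

theorem IsFlow.exists_circuit_through {z : E → ℤ} (hz : IsFlow src tgt z) {e : E}
    (he : z e ≠ 0) : ∃ c, IsFlow src tgt c ∧ c e ≠ 0 ∧ IsSubchain c (Int.sign ∘ z) := by
  induction hN : ∑ f, (z f).natAbs using Nat.strong_induction_on generalizing z with
  | _ N ih =>
    obtain ⟨c', hc'flow, hc'0, hc'⟩ := hz.exists_circuit (Function.ne_iff.2 ⟨e, he⟩)
    by_cases hc'e : c' e = 0
    · obtain ⟨c, hcflow, hce, hc⟩ := ih _ (hN ▸ hc'.sum_natAbs_sub_lt hc'0) (hz.sub hc'flow)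
        (by simpa [hc'e] using he) rfl
      exact ⟨c, hcflow, hce, hc'.trans_sign_sub hc⟩
    · exact ⟨c', hc'flow, hc'e, hc'⟩

end Circuits

section Decompositions

variable {V E : Type} [Fintype E] [DecidableEq V] {src tgt : E → V}

theorem IsFlow.exists_decomposition_inner_pos {z : E → ℤ} (hz : IsFlow src tgt z) {e : E}
    (he : 2 ≤ |z e|) : ∃ a b, IsFlow src tgt a ∧ IsFlow src tgt b ∧ a ≠ 0 ∧ b ≠ 0 ∧
      a + b = z ∧ 0 < ∑ f, a f * b f := by
  have hze : z e ≠ 0 := by rintro h; simp [h] at he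
  obtain ⟨c, hc, hce, hsub⟩ := hz.exists_circuit_through hze
  have hce' : c e = (z e).sign := (hsub e).resolve_left hce
  have hpos : 0 < c e * (z - c) e := by
    rw [Pi.sub_apply, hce']; exact Int.sign_mul_sub_sign_pos he
  refine ⟨c, z - c, hc, hz.sub hc, Function.ne_iff.2 ⟨e, hce⟩,
    Function.ne_iff.2 ⟨e, right_ne_zero_of_mul hpos.ne'⟩, add_sub_cancel _ _,
    sum_pos' (fun f _ => ?_) ⟨e, mem_univ e, hpos⟩⟩
  rcases hsub f with h | h
  · simp [h]
  · rw [Pi.sub_apply, h]; exact Int.sign_mul_sub_sign_nonneg _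

theorem exists_decomposition_of_subchains {x₁ x₂ p₁ p₂ : E → ℤ} (hx₁ : IsFlow src tgt x₁)
    (hx₂ : IsFlow src tgt x₂) (hdisj : ∀ e, x₁ e = 0 ∨ x₂ e = 0) (hp₁ : IsSubchain p₁ x₁)
    (hp₂ : IsSubchain p₂ x₂) (hbd : chainBoundary src tgt p₁ = chainBoundary src tgt p₂)
    (hbd0 : chainBoundary src tgt p₁ ≠ 0) :
    ∃ a b, IsFlow src tgt a ∧ IsFlow src tgt b ∧ a ≠ 0 ∧ b ≠ 0 ∧ a + b = x₁ + x₂ ∧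
      ∑ e, a e * b e = 0 ∧ a ≠ x₁ ∧ a ≠ x₂ := by
  rw [isFlow_iff_chainBoundary_eq_zero] at hx₁ hx₂
  have hp₁0 : p₁ ≠ 0 := fun h => hbd0 (by rw [h, map_zero])
  have hq₁0 : x₁ - p₁ ≠ 0 := fun h => hbd0 (by rw [← sub_sub_cancel x₁ p₁, h, sub_zero, hx₁])
  obtain ⟨e₁, he₁⟩ : ∃ e, p₁ e ≠ 0 := Function.ne_iff.1 hp₁0
  obtain ⟨e₂, he₂⟩ : ∃ e, x₁ e - p₁ e ≠ 0 := Function.ne_iff.1 hq₁0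
  have hx₁e₁ : x₁ e₁ ≠ 0 := fun h => he₁ (hp₁.eq_zero h)
  have hp₁e₂ : p₁ e₂ = 0 := (hp₁ e₂).resolve_right fun h => he₂ (by rw [h, sub_self])
  have hx₁e₂ : x₁ e₂ ≠ 0 := by simpa [hp₁e₂] using he₂
  have hoff : ∀ e, x₁ e ≠ 0 → x₂ e = 0 ∧ p₂ e = 0 := fun e he =>
    have h := (hdisj e).resolve_left he
    ⟨h, hp₂.eq_zero h⟩
  refine ⟨p₁ + (x₂ - p₂), (x₁ - p₁) + p₂, ?_, ?_, ?_, ?_, by abel, ?_, ?_, ?_⟩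
  · rw [isFlow_iff_chainBoundary_eq_zero, map_add, map_sub, hx₂, hbd]; abel
  · rw [isFlow_iff_chainBoundary_eq_zero, map_add, map_sub, hx₁, hbd]; abel
  · exact Function.ne_iff.2 ⟨e₁, by simp [(hoff e₁ hx₁e₁).1, (hoff e₁ hx₁e₁).2, he₁]⟩
  · exact Function.ne_iff.2 ⟨e₂, by simp [(hoff e₂ hx₁e₂).2, hx₁e₂, hp₁e₂]⟩
  · refine sum_eq_zero fun e _ => ?_
    rcases hdisj e with h | h
    · simp only [Pi.add_apply, Pi.sub_apply, h, hp₁.eq_zero h]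
      simpa [mul_comm] using hp₂.mul_sub_eq_zero e
    · simp only [Pi.add_apply, Pi.sub_apply, h, hp₂.eq_zero h]
      simpa using hp₁.mul_sub_eq_zero e
  · exact Function.ne_iff.2
      ⟨e₂, by simp [(hoff e₂ hx₁e₂).1, (hoff e₂ hx₁e₂).2, hp₁e₂, Ne.symm hx₁e₂]⟩
  · exact Function.ne_iff.2 ⟨e₁, by simp [(hoff e₁ hx₁e₁).1, (hoff e₁ hx₁e₁).2, he₁]⟩

end Decompositions

theorem orientedHead_eq_or_orientedTail_eq {V E : Type} {src tgt : E → V} (x : E → ℤ) {e : E}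
    {u : V} (h : src e = u ∨ tgt e = u) :
    orientedHead src tgt x e = u ∨ orientedTail src tgt x e = u := by
  unfold orientedHead orientedTail; split_ifs <;> tauto

theorem SharesVertex.oriented {V E : Type} {src tgt : E → V} (x : E → ℤ) {a b : E}
    (h : SharesVertex src tgt a b) :
    orientedHead src tgt x a = orientedHead src tgt x b ∨
      orientedHead src tgt x a = orientedTail src tgt x b ∨
      orientedTail src tgt x a = orientedHead src tgt x b ∨
      orientedTail src tgt x a = orientedTail src tgt x b := by
  unfold SharesVertex at h; unfold orientedHead orientedTail; split_ifs <;> tauto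

section Successors

variable {V E : Type} {src tgt : E → V} {x : E → ℤ} {σ : Equiv.Perm E}

variable (src tgt x σ) in
structure IsSuccessorPerm : Prop where
  ne_zero_iff : ∀ e, x (σ e) ≠ 0 ↔ x e ≠ 0
  orientedTail_apply : ∀ e, x e ≠ 0 → orientedTail src tgt x (σ e) = orientedHead src tgt x e

theorem IsSuccessorPerm.symm_apply (hσ : IsSuccessorPerm src tgt x σ) {e : E} (he : x e ≠ 0) :
    x (σ.symm e) ≠ 0 ∧ orientedHead src tgt x (σ.symm e) = orientedTail src tgt x e := by
  have h : x (σ.symm e) ≠ 0 := (hσ.ne_zero_iff _).1 (by rwa [Equiv.apply_symm_apply])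
  refine ⟨h, ?_⟩
  rw [← hσ.orientedTail_apply _ h, Equiv.apply_symm_apply]

theorem IsSuccessorPerm.pow_apply_ne_zero (hσ : IsSuccessorPerm src tgt x σ) {e : E}
    (he : x e ≠ 0) (n : ℕ) : x ((σ ^ n) e) ≠ 0 := by
  induction n with
  | zero => exact he
  | succ n ih => rw [pow_succ', Equiv.Perm.mul_apply]; exact (hσ.ne_zero_iff _).2 ih

theorem IsSuccessorPerm.exists_orientedTail_eq (hσ : IsSuccessorPerm src tgt x σ) {u : V}
    (hu : ∃ e, x e ≠ 0 ∧ (src e = u ∨ tgt e = u)) :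
    ∃ b, x b ≠ 0 ∧ orientedTail src tgt x b = u := by
  obtain ⟨e, he, heu⟩ := hu
  rcases orientedHead_eq_or_orientedTail_eq x heu with h | h
  · exact ⟨σ e, (hσ.ne_zero_iff e).2 he, (hσ.orientedTail_apply e he).trans h⟩
  · exact ⟨e, he, h⟩

theorem IsSuccessorPerm.exists_orientedHead_eq (hσ : IsSuccessorPerm src tgt x σ) {v : V}
    (hv : ∃ e, x e ≠ 0 ∧ (src e = v ∨ tgt e = v)) :
    ∃ a, x a ≠ 0 ∧ orientedHead src tgt x a = v := by
  obtain ⟨e, he, hev⟩ := hv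
  rcases orientedHead_eq_or_orientedTail_eq x hev with h | h
  · exact ⟨e, he, h⟩
  · exact ⟨σ.symm e, (hσ.symm_apply he).1, (hσ.symm_apply he).2.trans h⟩

end Successors

section CycleClasses

variable {V E : Type} [Fintype E] [DecidableEq V] {src tgt : E → V} {x : E → ℤ}
  {σ : Equiv.Perm E}

theorem IsCycleClass.isFlow (hx : IsCycleClass src tgt x) : IsFlow src tgt x := hx.2.1

theorem IsCycleClass.sign_eq (hx : IsCycleClass src tgt x) (e : E) : (x e).sign = x e := by
  rcases hx.2.2.1 e with h | h | h <;> simp [h]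

theorem IsCycleClass.orientedHead_injOn (hx : IsCycleClass src tgt x) :
    Set.InjOn (orientedHead src tgt x) {e | x e ≠ 0} := by
  intro a ha b hb hab
  have hhead : ∀ e, flowHead src tgt x e = orientedHead src tgt x e := fun e => by
    unfold flowHead orientedHead; rcases hx.2.2.1 e with h | h | h <;> simp [h]
  exact hx.2.2.2.1 (orientedHead src tgt x b) ⟨ha, (hhead a).trans hab⟩ ⟨hb, hhead b⟩

theorem IsCycleClass.exists_isSuccessorPerm (hx : IsCycleClass src tgt x) :
    ∃ σ, IsSuccessorPerm src tgt x σ := by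
  obtain ⟨τ, hτ⟩ := hx.isFlow.exists_successor
  set f : E → E := fun e => if x e = 0 then e else τ e
  have hf : ∀ e, x e ≠ 0 → f e = τ e := fun e he => if_neg he
  have hfsupp : ∀ e, x (f e) ≠ 0 ↔ x e ≠ 0 := fun e => by
    by_cases he : x e = 0
    · simp [f, he]
    · simp [hf e he, he, (hτ e he).1]
  have hinj : Injective f := by
    intro a b hab
    have hab' : x a ≠ 0 ↔ x b ≠ 0 := by rw [← hfsupp a, ← hfsupp b, hab]
    by_cases ha : x a = 0
    · have hb : x b = 0 := not_not.1 fun hb => hab'.2 hb ha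
      simpa [f, ha, hb] using hab
    · have hb := hab'.1 ha
      refine hx.orientedHead_injOn ha hb ?_
      rw [← (hτ a ha).2, ← (hτ b hb).2, ← hf a ha, ← hf b hb, hab]
  exact ⟨Equiv.ofBijective f (Finite.injective_iff_bijective.1 hinj), hfsupp,
    fun e he => by simp [hf e he, (hτ e he).2]⟩

theorem IsSuccessorPerm.orientedTail_injOn (hσ : IsSuccessorPerm src tgt x σ)
    (hx : IsCycleClass src tgt x) : Set.InjOn (orientedTail src tgt x) {e | x e ≠ 0} := by
  intro a ha b hb hab
  have h := hx.orientedHead_injOn (hσ.symm_apply ha).1 (hσ.symm_apply hb).1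
    (by rw [(hσ.symm_apply ha).2, (hσ.symm_apply hb).2, hab])
  simpa using congrArg σ h

theorem IsSuccessorPerm.sameCycle (hσ : IsSuccessorPerm src tgt x σ)
    (hx : IsCycleClass src tgt x) {a b : E} (ha : x a ≠ 0) (hb : x b ≠ 0) :
    σ.SameCycle a b := by
  have hconn := hx.2.2.2.2 a b ha hb
  clear hb
  induction hconn with
  | refl => rfl
  | tail _ hpq ih =>
    obtain ⟨hp, hq, hshare⟩ := hpq
    refine ih.trans ?_
    rcases hshare.oriented x with h | h | h | h
    · rw [hx.orientedHead_injOn hp hq h]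
    · rw [← hσ.orientedTail_injOn hx ((hσ.ne_zero_iff _).2 hp) hq
        ((hσ.orientedTail_apply _ hp).trans h)]
      exact Equiv.Perm.sameCycle_apply_right.2 (.refl _ _)
    · rw [← hσ.orientedTail_injOn hx ((hσ.ne_zero_iff _).2 hq) hp
        ((hσ.orientedTail_apply _ hq).trans h.symm)]
      exact Equiv.Perm.sameCycle_apply_left.2 (.refl _ _)
    · rw [hσ.orientedTail_injOn hx hp hq h]

theorem IsCycleClass.exists_path (hx : IsCycleClass src tgt x) {u v : V}
    (hu : ∃ e, x e ≠ 0 ∧ (src e = u ∨ tgt e = u))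
    (hv : ∃ e, x e ≠ 0 ∧ (src e = v ∨ tgt e = v)) :
    ∃ p, IsSubchain p x ∧ ∀ w, chainBoundary src tgt p w =
      (if v = w then 1 else 0) - (if u = w then 1 else 0) := by
  classical
  obtain ⟨σ, hσ⟩ := hx.exists_isSuccessorPerm
  obtain ⟨b, hb, hbu⟩ := hσ.exists_orientedTail_eq hu
  obtain ⟨a, ha, hav⟩ := hσ.exists_orientedHead_eq hv
  have hreach : ∃ n, (σ ^ n) b = a := (hσ.sameCycle hx hb ha).exists_nat_pow_eq
  set N := Nat.find hreach
  have hinj := σ.injOn_pow_apply_of_forall_lt_ne (Nat.find_spec hreach)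
    fun m hm => Nat.find_min hreach hm
  refine ⟨signChainOn x ((range (N + 1)).image fun k => (σ ^ k) b), fun e => ?_, fun w => ?_⟩
  · simpa only [Function.comp_apply, hx.sign_eq] using isSubchain_signChainOn x _ e
  · rw [chainBoundary_signChainOn_trail x _ (N + 1) (fun k _ => hσ.pow_apply_ne_zero hb k) hinj
      (fun k _ => by
        rw [pow_succ', Equiv.Perm.mul_apply]
        exact hσ.orientedTail_apply _ (hσ.pow_apply_ne_zero hb k))]
    rw [pow_succ', Equiv.Perm.mul_apply, Nat.find_spec hreach, hσ.orientedTail_apply a ha, hav,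
      pow_zero, Equiv.Perm.one_apply, hbu]

end CycleClasses

theorem rigid_cycles_meet_in_at_most_one_vertex_general {V E : Type}
    [Fintype E] [DecidableEq V]
    (src tgt : E → V) (x₁ x₂ : E → ℤ)
    (hc₁ : IsCycleClass src tgt x₁) (hc₂ : IsCycleClass src tgt x₂)
    (horth : ∑ e, x₁ e * x₂ e = 0)
    -- `[C₁] + [C₂]` is rigid in `Flow(G)`: simple, with a unique unordered decomposition
    -- as a sum of two nonzero orthogonal flows.
    (hsimple : ∀ a b : E → ℤ, IsFlow src tgt a → IsFlow src tgt b → a ≠ 0 → b ≠ 0 →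
        a + b = x₁ + x₂ → ∑ e, a e * b e ≤ 0)
    (hunique : ∀ a b : E → ℤ, IsFlow src tgt a → IsFlow src tgt b → a ≠ 0 → b ≠ 0 →
        a + b = x₁ + x₂ → (∑ e, a e * b e) = 0 →
        (a = x₁ ∧ b = x₂) ∨ (a = x₂ ∧ b = x₁)) :
    (∀ e, x₁ e = 0 ∨ x₂ e = 0) ∧
    ({v : V | (∃ e, x₁ e ≠ 0 ∧ (src e = v ∨ tgt e = v)) ∧
        (∃ e, x₂ e ≠ 0 ∧ (src e = v ∨ tgt e = v))} : Set V).Subsingleton := by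
  have hdisj : ∀ e, x₁ e = 0 ∨ x₂ e = 0 := by
    by_contra! hshared
    obtain ⟨e, -, he⟩ := exists_pos_of_sum_zero_of_exists_nonzero _ horth
      (hshared.imp fun e he => ⟨mem_univ e, mul_ne_zero he.1 he.2⟩)
    -- the cycles traverse `e` in the same direction, so `[C₁] + [C₂]` has coefficient `±2` there
    have h2 : 2 ≤ |(x₁ + x₂) e| := by
      rcases hc₁.2.2.1 e with h | h | h <;> rcases hc₂.2.2.1 e with h' | h' | h' <;>
        simp_all
    obtain ⟨a, b, ha, hb, ha0, hb0, hab, hpos⟩ :=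
      (hc₁.isFlow.add hc₂.isFlow).exists_decomposition_inner_pos h2
    exact (hsimple a b ha hb ha0 hb0 hab).not_gt hpos
  refine ⟨hdisj, fun u ⟨hu₁, hu₂⟩ v ⟨hv₁, hv₂⟩ => not_not.1 fun huv => ?_⟩
  obtain ⟨p₁, hp₁, hbd₁⟩ := hc₁.exists_path hu₁ hv₁
  obtain ⟨p₂, hp₂, hbd₂⟩ := hc₂.exists_path hu₂ hv₂
  obtain ⟨a, b, ha, hb, ha0, hb0, hab, horth', hax₁, hax₂⟩ :=
    exists_decomposition_of_subchains hc₁.isFlow hc₂.isFlow hdisj hp₁ hp₂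
      (funext fun w => (hbd₁ w).trans (hbd₂ w).symm)
      (Function.ne_iff.2 ⟨u, by simp [hbd₁, Ne.symm huv]⟩)
  rcases hunique a b ha hb ha0 hb0 hab horth' with ⟨h, -⟩ | ⟨h, -⟩
  exacts [hax₁ h, hax₂ h]

/-- Let `G` be a planar graph embedded in `S²` (encoded by a face set `F` and the two faces
adjacent to each edge, with every cycle bounding a disk of faces), and let `C₁`, `C₂` be
oriented cycles with `[C₁]·[C₂] = 0` and `[C₁] + [C₂]` rigid in `Flow(G)`.  Then `C₁` and
`C₂` share no edges and intersect in at most one vertex. -/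
theorem rigid_cycles_meet_in_at_most_one_vertex {V E F : Type}
    [Fintype V] [Fintype E] [Fintype F] [DecidableEq V] [DecidableEq F]
    (src tgt : E → V) (sides : E → F × F) (x₁ x₂ : E → ℤ)
    (hc₁ : IsCycleClass src tgt x₁) (hc₂ : IsCycleClass src tgt x₂)
    (hD₁ : ∃ D : Finset F, BoundsDisk sides D x₁)
    (hD₂ : ∃ D : Finset F, BoundsDisk sides D x₂)
    (horth : ∑ e, x₁ e * x₂ e = 0)
    -- `[C₁] + [C₂]` is rigid in `Flow(G)`: simple, with a unique unordered decomposition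
    -- as a sum of two nonzero orthogonal flows.
    (hsimple : ∀ a b : E → ℤ, IsFlow src tgt a → IsFlow src tgt b → a ≠ 0 → b ≠ 0 →
        a + b = x₁ + x₂ → ∑ e, a e * b e ≤ 0)
    (hunique : ∀ a b : E → ℤ, IsFlow src tgt a → IsFlow src tgt b → a ≠ 0 → b ≠ 0 →
        a + b = x₁ + x₂ → (∑ e, a e * b e) = 0 →
        (a = x₁ ∧ b = x₂) ∨ (a = x₂ ∧ b = x₁)) :
    (∀ e, x₁ e = 0 ∨ x₂ e = 0) ∧
    ({v : V | (∃ e, x₁ e ≠ 0 ∧ (src e = v ∨ tgt e = v)) ∧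
        (∃ e, x₂ e ≠ 0 ∧ (src e = v ∨ tgt e = v))} : Set V).Subsingleton :=
  rigid_cycles_meet_in_at_most_one_vertex_general src tgt x₁ x₂ hc₁ hc₂ horth hsimple hunique
end
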